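/- For every k ≥ 1, every T ∈ Tab(2,k), every a ∈ ℂ∖{0} and every (l,b) ∈ {1,2}×(ℂ∖{0}), one has z_{l,b}(m^{(2)}_{T,a}) ≤ 2; that is, every monomial of the twisted q-character of the Kirillov–Reshetikhin module W^{(2)}_{k,a} of type D_4^{(3)} has affine degree at most 2. -/

import Mathlib

noncomputable section

/-- The set `B = {1,2,3,4,4̄,3̄,2̄,1̄}`. -/
inductive BB : Type
  | b1 | b2 | b3 | b4 | b4' | b3' | b2' | b1'
  deriving DecidableEq

instance : Fintype BB where
  elems := {.b1, .b2, .b3, .b4, .b4', .b3', .b2', .b1'}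
  complete := fun x => by cases x <;> simp

/-- The rank used to define the partial order on `B`
(`4` and `4̄` get the same rank, making them incomparable). -/
def BB.rank : BB → ℕ
  | .b1 => 0 | .b2 => 1 | .b3 => 2 | .b4 => 3 | .b4' => 3
  | .b3' => 4 | .b2' => 5 | .b1' => 6

/-- The partial order `⪯` on `B` : `1 ≺ 2 ≺ 3 ≺ 4 ≺ 3̄ ≺ 2̄ ≺ 1̄` and `3 ≺ 4̄ ≺ 3̄`,
with `4` and `4̄` incomparable. -/
def BB.le (x y : BB) : Prop := x = y ∨ x.rank < y.rank

/-- The strict order `≺` on `B`. -/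
def BB.lt (x y : BB) : Prop := x.rank < y.rank

/-- Monomials: the free abelian group on `{1,2} × ℂˣ`, written additively;
`Finsupp.single (i,b) 1` corresponds to the generator `Z_{i+1,b}`. -/
abbrev Mon2 : Type := (Fin 2 × ℂˣ) →₀ ℤ

/-- The group ring `ℤ[G]`. -/
abbrev LR2 : Type := AddMonoidAlgebra ℤ Mon2

/-- The generator `Z_{i,b}` (with `i : Fin 2` indexing `{1,2}`). -/
def Zv (i : Fin 2) (b : ℂˣ) : Mon2 := Finsupp.single (i, b) 1

/-- `j = e^{2iπ/3}`, a primitive cube root of unity, as a unit of `ℂ`. -/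
def jC : ℂˣ := Units.mk0 (Complex.exp (2 * Real.pi * Complex.I / 3)) (Complex.exp_ne_zero _)

/-- The boxes `⟦α⟧_a ∈ G` for `α ∈ B` (written additively). -/
def box (q : ℂˣ) : BB → ℂˣ → Mon2
  | .b1, a => Zv 0 a
  | .b2, a => -Zv 0 (a * q ^ 2) + Zv 1 (a ^ 3 * q ^ 3)
  | .b3, a => -Zv 1 (a ^ 3 * q ^ 9) + Zv 0 (a * q ^ 2 * jC) + Zv 0 (a * q ^ 2 * jC ^ 2)
  | .b4, a => Zv 0 (a * q ^ 2 * jC) - Zv 0 (a * q ^ 4 * jC ^ 2)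
  | .b4', a => Zv 0 (a * q ^ 2 * jC ^ 2) - Zv 0 (a * q ^ 4 * jC)
  | .b3', a => -Zv 0 (a * q ^ 4 * jC) - Zv 0 (a * q ^ 4 * jC ^ 2) + Zv 1 (a ^ 3 * q ^ 9)
  | .b2', a => Zv 0 (a * q ^ 4) - Zv 1 (a ^ 3 * q ^ 15)
  | .b1', a => -Zv 0 (a * q ^ 6)

/-- `Tab(1,k)`: sequences `(T_1,…,T_k)` in `B` with `T_p ⪯ T_{p+1}`. -/
def IsTab1 (k : ℕ) (T : Fin k → BB) : Prop :=
  ∀ (p : ℕ) (h : p + 1 < k), BB.le (T ⟨p, Nat.lt_of_succ_lt h⟩) (T ⟨p + 1, h⟩)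

/-- The monomial `m^{(1)}_{T,a} = ∏_{p=1}^{k} ⟦T_p⟧_{aq^{2(p-1)}}` (written additively). -/
def m1 (q : ℂˣ) {k : ℕ} (T : Fin k → BB) (a : ℂˣ) : Mon2 :=
  ∑ p : Fin k, box q (T p) (a * q ^ (2 * (p : ℕ)))

/-- `Tab(2,k)`: two-row arrays with entries in `B` satisfying (θ1)–(θ4).
Row `i : Fin 2` corresponds to row `i+1` of the paper. -/
def IsTab2 (k : ℕ) (T : Fin 2 → Fin k → BB) : Prop :=
  (∀ i : Fin 2, IsTab1 k (T i)) ∧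
  (∀ p : Fin k, ¬ BB.le (T 1 p) (T 0 p)) ∧
  (¬ ∃ p p' : Fin k, p < p' ∧
      (∀ r : Fin k, p ≤ r → r < p' → T 0 r = BB.b3) ∧ T 0 p' = BB.b4 ∧
      T 1 p = BB.b4 ∧ (∀ r : Fin k, p < r → r ≤ p' → T 1 r = BB.b3')) ∧
  (¬ ∃ p p' : Fin k, p < p' ∧
      (∀ r : Fin k, p ≤ r → r < p' → T 0 r = BB.b3) ∧ T 0 p' = BB.b4' ∧
      T 1 p = BB.b4' ∧ (∀ r : Fin k, p < r → r ≤ p' → T 1 r = BB.b3'))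

/-- The monomial `m^{(2)}_{T,a} = ∏_{i∈{1,2}} ∏_{p=1}^{k} ⟦T_{i,p}⟧_{aq^{2(p-i)}}`
(written additively; rows and columns are 0-indexed). -/
def m2 (q : ℂˣ) {k : ℕ} (T : Fin 2 → Fin k → BB) (a : ℂˣ) : Mon2 :=
  ∑ i : Fin 2, ∑ p : Fin k, box q (T i p) (a * q ^ (2 * ((p : ℤ) - (i : ℤ))))

/-!
Each row of the tableau contributes at most `1` to every exponent, and there are two rows.
A single box has all exponents at most `1`. For a positive entry `Z_{l,b}` of `⟦α⟧_c`, the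
normalised parameter `b ^ 3` (if `l = 1`) or `b` (if `l = 2`) forgets the cube roots of unity
and equals `c ^ 3 q ^ (qWeight α)`, with `qWeight` monotone along `⪯`. Along a row `c = a q^{2p}`, so these
normalised parameters have strictly increasing `q`-exponents `6p + qWeight (T_p)`; since `q` is not a
root of unity, no two boxes of a row can contribute positively to the same exponent.
-/

lemma isPrimitiveRoot_jC : IsPrimitiveRoot (jC : ℂ) 3 := by
  simpa [jC] using Complex.isPrimitiveRoot_exp 3 (by norm_num)

lemma jC_pow_three : jC ^ 3 = 1 := by
  ext
  push_cast
  exact isPrimitiveRoot_jC.pow_eq_one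

lemma jC_ne_jC_sq : jC ≠ jC ^ 2 := by
  intro h
  have h' : (jC : ℂ) ^ 1 = (jC : ℂ) ^ 2 := by simpa using congrArg Units.val h
  have := isPrimitiveRoot_jC.pow_inj (by norm_num) (by norm_num) h'
  omega

lemma zpow_injective_of_not_root_of_unity {q : ℂˣ} (hq : ∀ n : ℕ, 0 < n → (q : ℂ) ^ n ≠ 1) :
    Function.Injective fun n : ℤ => q ^ n := by
  refine injective_zpow_iff_not_isOfFinOrder.2 fun hfin => ?_
  obtain ⟨n, hn, hqn⟩ := isOfFinOrder_iff_pow_eq_one.1 hfin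
  exact hq n hn (by simpa using congrArg Units.val hqn)

lemma Finset.sum_le_of_subsingleton_pos {ι M : Type*} [AddCommMonoid M] [LinearOrder M]
    [IsOrderedAddMonoid M] {s : Finset ι} {f : ι → M} {c : M} (hc : 0 ≤ c)
    (hle : ∀ i ∈ s, f i ≤ c) (hpos : ∀ i ∈ s, ∀ j ∈ s, 0 < f i → 0 < f j → i = j) :
    ∑ i ∈ s, f i ≤ c := by
  classical
  by_cases h : ∃ i ∈ s, 0 < f i
  · obtain ⟨i, hi, hfi⟩ := h
    have hrest : ∑ j ∈ s.erase i, f j ≤ 0 := Finset.sum_nonpos fun j hj =>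
      not_lt.1 fun hfj =>
        Finset.ne_of_mem_erase hj (hpos j (Finset.mem_of_mem_erase hj) i hi hfj hfi)
    calc ∑ j ∈ s, f j = f i + ∑ j ∈ s.erase i, f j := (Finset.add_sum_erase s f hi).symm
      _ ≤ c + 0 := add_le_add (hle i hi) hrest
      _ = c := add_zero c
  · push Not at h
    exact (Finset.sum_nonpos h).trans hc

lemma box_apply_le_one (q : ℂˣ) (α : BB) (c : ℂˣ) (x : Fin 2 × ℂˣ) : box q α c x ≤ 1 := by
  have hj : c * q ^ 2 * jC ≠ c * q ^ 2 * jC ^ 2 := fun h => jC_ne_jC_sq (mul_left_cancel h)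
  cases α <;> simp only [box, Zv, Finsupp.add_apply, Finsupp.neg_apply, Finsupp.sub_apply,
    Finsupp.single_apply] <;> split_ifs <;> subst_vars <;> simp_all

-- `1̄` has no positive entry; its weight only keeps `qWeight` monotone.
def BB.qWeight : BB → ℕ
  | .b1 => 0 | .b2 => 3 | .b3 => 6 | .b4 => 6 | .b4' => 6 | .b3' => 9 | .b2' => 12 | .b1' => 18

def paramDegree (l : Fin 2) : ℕ := if l = 0 then 3 else 1

lemma pow_paramDegree_of_box_apply_pos (q : ℂˣ) (α : BB) (c : ℂˣ) (x : Fin 2 × ℂˣ)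
    (h : 0 < box q α c x) : x.2 ^ paramDegree x.1 = c ^ 3 * q ^ α.qWeight := by
  have hj : (jC ^ 2) ^ 3 = 1 := by rw [← pow_mul, mul_comm, pow_mul, jC_pow_three, one_pow]
  cases α <;> simp only [box, Zv, Finsupp.add_apply, Finsupp.neg_apply, Finsupp.sub_apply,
    Finsupp.single_apply] at h <;> split_ifs at h <;> subst_vars <;>
    simp_all [paramDegree, BB.qWeight, mul_pow, jC_pow_three, ← pow_mul]

lemma BB.qWeight_le_of_rank_le {α β : BB} (h : α.rank ≤ β.rank) : α.qWeight ≤ β.qWeight := by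
  cases α <;> cases β <;> simp_all [BB.rank, BB.qWeight]

lemma BB.rank_le_rank_of_le {α β : BB} (h : BB.le α β) : α.rank ≤ β.rank :=
  h.elim (fun h => h ▸ le_rfl) le_of_lt

lemma IsTab1.monotone_rank {k : ℕ} {T : Fin k → BB} (hT : IsTab1 k T) :
    Monotone fun p => (T p).rank := by
  cases k with
  | zero => exact fun p => p.elim0
  | succ k => exact Fin.monotone_iff_le_succ.2 fun i => BB.rank_le_rank_of_le (hT i i.succ.isLt)

lemma IsTab1.strictMono_qExponent {k : ℕ} {T : Fin k → BB} (hT : IsTab1 k T) :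
    StrictMono fun p : Fin k => 6 * (p : ℤ) + (T p).qWeight := by
  intro p p' hlt
  have hw := BB.qWeight_le_of_rank_le (hT.monotone_rank hlt.le)
  have hp : (p : ℕ) < p' := hlt
  dsimp only
  omega

lemma row_apply_le_one {q : ℂˣ} (hq : ∀ n : ℕ, 0 < n → (q : ℂ) ^ n ≠ 1) {k : ℕ}
    {T : Fin k → BB} (hT : IsTab1 k T) (a : ℂˣ) (s : ℤ) (x : Fin 2 × ℂˣ) :
    (∑ p, box q (T p) (a * q ^ (2 * ((p : ℤ) - s)))) x ≤ 1 := by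
  rw [Finsupp.finsetSum_apply]
  refine Finset.sum_le_of_subsingleton_pos zero_le_one (fun p _ => box_apply_le_one ..) ?_
  intro p _ p' _ hp hp'
  have hparam : ∀ {p : Fin k}, 0 < box q (T p) (a * q ^ (2 * ((p : ℤ) - s))) x →
      x.2 ^ paramDegree x.1 = a ^ 3 * q ^ (6 * ((p : ℤ) - s) + (T p).qWeight) := by
    intro p h
    rw [pow_paramDegree_of_box_apply_pos q _ _ x h, zpow_add, zpow_natCast, mul_pow,
      ← zpow_natCast (q ^ _), ← zpow_mul, mul_assoc]
    congr 3
    push_cast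
    ring
  have hexp := zpow_injective_of_not_root_of_unity hq
    (mul_left_cancel ((hparam hp).symm.trans (hparam hp')))
  exact hT.strictMono_qExponent.injective (by omega)

theorem m2_affine_degree_le_two_general (q : ℂˣ) (hq : ∀ n : ℕ, 0 < n → (q : ℂ) ^ n ≠ 1)
    (k : ℕ) (T : Fin 2 → Fin k → BB) (hT : IsTab2 k T) (a : ℂˣ) :
    ∀ lb : Fin 2 × ℂˣ, (m2 q T a) lb ≤ 2 := by
  intro lb
  have hrow := fun i : Fin 2 => row_apply_le_one hq (hT.1 i) a i lb
  rw [m2, Fin.sum_univ_two, Finsupp.add_apply]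
  linarith [hrow 0, hrow 1]

/-- Every monomial of the twisted q-character of the Kirillov–Reshetikhin module
`W^{(2)}_{k,a}` of type `D₄⁽³⁾` has affine degree at most `2`: all exponents of
`m^{(2)}_{T,a}` are at most `2`. -/
theorem m2_affine_degree_le_two (q : ℂˣ) (hq : ∀ n : ℕ, 0 < n → (q : ℂ) ^ n ≠ 1)
    (k : ℕ) (hk : 1 ≤ k) (T : Fin 2 → Fin k → BB) (hT : IsTab2 k T) (a : ℂˣ) :
    ∀ lb : Fin 2 × ℂˣ, (m2 q T a) lb ≤ 2 :=
  m2_affine_degree_le_two_general q hq k T hT a
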